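/- arXiv:1411.6567 — 3 statements merged into one kernel-verified Lean document; each statement's English description precedes it below -/
import Mathlib

section
/- Let 0 < ε < 1 and let α > 0 satisfy tan(α) = −tanh(α) (respectively tan(α) = coth(α), tan(α) = −coth(α), tan(α) = tanh(α)). Then the function u(x,y) = cos(αx)cosh(αy) (respectively sin(αx)cosh(αy), cos(αx)sinh(αy), sin(αx)sinh(αy)) is harmonic on the square (−1,1)² and satisfies the Steklov condition ∂_ν u = σ u on the boundary with σ = α tanh(α) (respectively α tanh(α), α coth(α), α coth(α)). -/
/-!
Each function is a product `F(x) G(y)` with `F'' = -α² F` and `G'' = α² G`, so it is harmonic,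
and the Steklov condition on the square splits into the one-dimensional Robin conditions
`F'(±1) = ±σ F(±1)` and `G'(±1) = ±σ G(±1)`. As each factor is even or odd, it suffices to check
them at `1`: for the hyperbolic factor this is an identity in `α`, for the trigonometric factor
it is exactly the transcendental relation on `tan α`.
-/

/-- Partial derivative in `x` of a function on `ℝ²`. -/
noncomputable def pdx (u : ℝ × ℝ → ℝ) (p : ℝ × ℝ) : ℝ :=
  deriv (fun x => u (x, p.2)) p.1

/-- Partial derivative in `y` of a function on `ℝ²`. -/
noncomputable def pdy (u : ℝ × ℝ → ℝ) (p : ℝ × ℝ) : ℝ :=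
  deriv (fun y => u (p.1, y)) p.2

/-- The Laplacian `∂²u/∂x² + ∂²u/∂y²` of a function on `ℝ²`. -/
noncomputable def lap2 (u : ℝ × ℝ → ℝ) (p : ℝ × ℝ) : ℝ :=
  deriv (fun x => deriv (fun x' => u (x', p.2)) x) p.1 +
  deriv (fun y => deriv (fun y' => u (p.1, y')) y) p.2

/-- `u` is a Steklov eigenfunction of the square `(-1,1)²` with eigenvalue `σ`:
`Δu = 0` inside the square and `∂_ν u = σu` on each of the four sides, the
outward normal derivative being `±∂_x u` on the sides `x = ±1` and `±∂_y u`
on the sides `y = ±1`. -/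
def IsSquareSteklov (u : ℝ × ℝ → ℝ) (σ : ℝ) : Prop :=
  (∀ p : ℝ × ℝ, p ∈ Set.Ioo (-1 : ℝ) 1 ×ˢ Set.Ioo (-1 : ℝ) 1 → lap2 u p = 0) ∧
  (∀ y ∈ Set.Icc (-1 : ℝ) 1,
    pdx u (1, y) = σ * u (1, y) ∧ -(pdx u (-1, y)) = σ * u (-1, y)) ∧
  (∀ x ∈ Set.Icc (-1 : ℝ) 1,
    pdy u (x, 1) = σ * u (x, 1) ∧ -(pdy u (x, -1)) = σ * u (x, -1))

open Real

def IsRobinSolution (c σ : ℝ) (F : ℝ → ℝ) : Prop :=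
  ∃ F' : ℝ → ℝ, (∀ x, HasDerivAt F (F' x) x) ∧ (∀ x, HasDerivAt F' (c * F x) x) ∧
    F' 1 = σ * F 1 ∧ -F' (-1) = σ * F (-1)

theorem IsRobinSolution.isSquareSteklov_mul {k σ : ℝ} {F G : ℝ → ℝ}
    (hF : IsRobinSolution (-k) σ F) (hG : IsRobinSolution k σ G) :
    IsSquareSteklov (fun p => F p.1 * G p.2) σ := by
  obtain ⟨F', hF, hF', hF₁, hF₂⟩ := hF
  obtain ⟨G', hG, hG', hG₁, hG₂⟩ := hG
  have pdx_eq (p : ℝ × ℝ) : pdx (fun p => F p.1 * G p.2) p = F' p.1 * G p.2 :=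
    ((hF p.1).mul_const (G p.2)).deriv
  have pdy_eq (p : ℝ × ℝ) : pdy (fun p => F p.1 * G p.2) p = F p.1 * G' p.2 :=
    ((hG p.2).const_mul (F p.1)).deriv
  refine ⟨fun p _ => ?_, fun y _ => ?_, fun x _ => ?_⟩
  · have hxx : deriv (fun x => deriv (fun x' => F x' * G p.2) x) p.1 = -k * F p.1 * G p.2 := by
      simp only [fun x => ((hF x).mul_const (G p.2)).deriv]
      exact ((hF' p.1).mul_const _).deriv
    have hyy : deriv (fun y => deriv (fun y' => F p.1 * G y') y) p.2 = F p.1 * (k * G p.2) := by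
      simp only [fun y => ((hG y).const_mul (F p.1)).deriv]
      exact ((hG' p.2).const_mul _).deriv
    rw [lap2, hxx, hyy]
    ring
  · rw [pdx_eq, pdx_eq]
    exact ⟨by linear_combination G y * hF₁, by linear_combination G y * hF₂⟩
  · rw [pdy_eq, pdy_eq]
    exact ⟨by linear_combination F x * hG₁, by linear_combination F x * hG₂⟩

theorem hasDerivAt_cos_mul (α x : ℝ) :
    HasDerivAt (fun t => cos (α * t)) (-(α * sin (α * x))) x := by
  simpa [mul_comm] using ((hasDerivAt_id x).const_mul α).cos

theorem hasDerivAt_sin_mul (α x : ℝ) :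
    HasDerivAt (fun t => sin (α * t)) (α * cos (α * x)) x := by
  simpa [mul_comm] using ((hasDerivAt_id x).const_mul α).sin

theorem hasDerivAt_cosh_mul (α x : ℝ) :
    HasDerivAt (fun t => cosh (α * t)) (α * sinh (α * x)) x := by
  simpa [mul_comm] using ((hasDerivAt_id x).const_mul α).cosh

theorem hasDerivAt_sinh_mul (α x : ℝ) :
    HasDerivAt (fun t => sinh (α * t)) (α * cosh (α * x)) x := by
  simpa [mul_comm] using ((hasDerivAt_id x).const_mul α).sinh

theorem isRobinSolution_cos_mul {α σ : ℝ} (h : -(α * sin α) = σ * cos α) :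
    IsRobinSolution (-α ^ 2) σ (fun x => cos (α * x)) :=
  ⟨_, hasDerivAt_cos_mul α,
    fun x => (((hasDerivAt_sin_mul α x).const_mul α).neg).congr_deriv (by ring),
    by simpa using h, by simpa using h⟩

theorem isRobinSolution_sin_mul {α σ : ℝ} (h : α * cos α = σ * sin α) :
    IsRobinSolution (-α ^ 2) σ (fun x => sin (α * x)) :=
  ⟨_, hasDerivAt_sin_mul α,
    fun x => ((hasDerivAt_cos_mul α x).const_mul α).congr_deriv (by ring),
    by simpa using h, by simpa using h⟩

theorem isRobinSolution_cosh_mul (α : ℝ) :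
    IsRobinSolution (α ^ 2) (α * tanh α) (fun y => cosh (α * y)) := by
  have h : α * sinh α = α * tanh α * cosh α := by
    rw [tanh_eq_sinh_div_cosh, mul_assoc, div_mul_cancel₀ _ (cosh_pos α).ne']
  exact ⟨_, hasDerivAt_cosh_mul α,
    fun y => ((hasDerivAt_sinh_mul α y).const_mul α).congr_deriv (by ring),
    by simpa using h, by simpa using h⟩

theorem isRobinSolution_sinh_mul {α : ℝ} (hα : sinh α ≠ 0) :
    IsRobinSolution (α ^ 2) (α * (cosh α / sinh α)) (fun y => sinh (α * y)) := by
  have h : α * cosh α = α * (cosh α / sinh α) * sinh α := by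
    rw [mul_assoc, div_mul_cancel₀ _ hα]
  exact ⟨_, hasDerivAt_sinh_mul α,
    fun y => ((hasDerivAt_cosh_mul α y).const_mul α).congr_deriv (by ring),
    by simpa using h, by simpa using h⟩

-- `tan x = 0` whenever `cos x = 0`, so a nonzero value of `tan x` forces `cos x ≠ 0`.
theorem Real.sin_eq_mul_cos_of_tan_eq {x c : ℝ} (h : tan x = c) (hc : c ≠ 0) :
    sin x = c * cos x := by
  have hcos : cos x ≠ 0 := fun h0 => hc (by rw [← h, tan_eq_sin_div_cos, h0, div_zero])
  rw [← h, tan_mul_cos hcos]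

theorem square_steklov_families_general (α : ℝ) (hα : 0 < α) :
    (Real.tan α = -Real.tanh α →
      IsSquareSteklov (fun p => Real.cos (α * p.1) * Real.cosh (α * p.2))
        (α * Real.tanh α)) ∧
    (Real.tan α = Real.cosh α / Real.sinh α →
      IsSquareSteklov (fun p => Real.sin (α * p.1) * Real.cosh (α * p.2))
        (α * Real.tanh α)) ∧
    (Real.tan α = -(Real.cosh α / Real.sinh α) →
      IsSquareSteklov (fun p => Real.cos (α * p.1) * Real.sinh (α * p.2))
        (α * (Real.cosh α / Real.sinh α))) ∧
    (Real.tan α = Real.tanh α →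
      IsSquareSteklov (fun p => Real.sin (α * p.1) * Real.sinh (α * p.2))
        (α * (Real.cosh α / Real.sinh α))) := by
  have hsinh : 0 < sinh α := sinh_pos_iff.mpr hα
  have htanh : 0 < tanh α := tanh_eq_sinh_div_cosh α ▸ div_pos hsinh (cosh_pos α)
  have hcoth : 0 < cosh α / sinh α := div_pos (cosh_pos α) hsinh
  have tanh_mul_coth : tanh α * (cosh α / sinh α) = 1 := by
    rw [tanh_eq_sinh_div_cosh]
    field_simp
  refine ⟨fun h => ?_, fun h => ?_, fun h => ?_, fun h => ?_⟩
  · have hsin := sin_eq_mul_cos_of_tan_eq h (neg_ne_zero.2 htanh.ne')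
    exact (isRobinSolution_cos_mul (by rw [hsin]; ring)).isSquareSteklov_mul
      (isRobinSolution_cosh_mul α)
  · have hsin := sin_eq_mul_cos_of_tan_eq h hcoth.ne'
    refine (isRobinSolution_sin_mul ?_).isSquareSteklov_mul (isRobinSolution_cosh_mul α)
    rw [hsin]
    linear_combination -α * cos α * tanh_mul_coth
  · have hsin := sin_eq_mul_cos_of_tan_eq h (neg_ne_zero.2 hcoth.ne')
    exact (isRobinSolution_cos_mul (by rw [hsin]; ring)).isSquareSteklov_mul
      (isRobinSolution_sinh_mul hsinh.ne')
  · have hsin := sin_eq_mul_cos_of_tan_eq h htanh.ne'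
    refine (isRobinSolution_sin_mul ?_).isSquareSteklov_mul (isRobinSolution_sinh_mul hsinh.ne')
    rw [hsin]
    linear_combination -α * cos α * tanh_mul_coth

/-- Let `0 < ε < 1` and `α > 0`. If `tan α = -tanh α` (resp. `tan α = coth α`,
`tan α = -coth α`, `tan α = tanh α`) then `cos(αx)cosh(αy)` (resp.
`sin(αx)cosh(αy)`, `cos(αx)sinh(αy)`, `sin(αx)sinh(αy)`) is harmonic on the
square `(-1,1)²` and is a Steklov eigenfunction with eigenvalue `α tanh α`
(resp. `α tanh α`, `α coth α`, `α coth α`); here `coth = cosh/sinh`. -/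
theorem square_steklov_families (ε : ℝ) (hε : 0 < ε) (hε1 : ε < 1)
    (α : ℝ) (hα : 0 < α) :
    (Real.tan α = -Real.tanh α →
      IsSquareSteklov (fun p => Real.cos (α * p.1) * Real.cosh (α * p.2))
        (α * Real.tanh α)) ∧
    (Real.tan α = Real.cosh α / Real.sinh α →
      IsSquareSteklov (fun p => Real.sin (α * p.1) * Real.cosh (α * p.2))
        (α * Real.tanh α)) ∧
    (Real.tan α = -(Real.cosh α / Real.sinh α) →
      IsSquareSteklov (fun p => Real.cos (α * p.1) * Real.sinh (α * p.2))
        (α * (Real.cosh α / Real.sinh α))) ∧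
    (Real.tan α = Real.tanh α →
      IsSquareSteklov (fun p => Real.sin (α * p.1) * Real.sinh (α * p.2))
        (α * (Real.cosh α / Real.sinh α))) :=
  square_steklov_families_general α hα
end

section
/- For 0 < ε < 1, the smaller root σ₁(ε) of the quadratic σ² − σ((ε+1)/ε)((1+ε²)/(1−ε²)) + 1/ε (i.e., the k = 1 polynomial p_1) is given by σ₁(ε) = (1/(2ε)) · ((1+ε²)/(1−ε)) · (1 − √(1 − 4ε((1−ε)/(1+ε²))²)), and it satisfies the asymptotic expansion σ₁(ε)·2π(1+ε) = 2π + 2πε + o(ε) as ε → 0⁺. -/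
/-!
Write `c = (1 + ε²) / (2ε(1 - ε))` and `s` for the square root in `sigmaOneAnnulus`. Then
`p₁(σ) = σ² - 2cσ + c²(1 - s²)`, whose roots are `c(1 ± s)`, so `σ₁ = c(1 - s)`.
Rationalizing gives `σ₁ = 2(1 - ε) / ((1 + ε²)(1 + s))`, a function that is differentiable at
`ε = 0` with value `1` and derivative `0`; hence `σ₁(ε) · 2π(1 + ε) = 2π(1 + ε)(1 + o(ε))`.
-/

open Real Filter

/-- The explicit formula for the first nonzero Steklov eigenvalue of the
annulus `A_ε = {ε < |x| < 1} ⊂ ℝ²`. -/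
noncomputable def sigmaOneAnnulus (ε : ℝ) : ℝ :=
  (1 / (2 * ε)) * ((1 + ε ^ 2) / (1 - ε)) *
    (1 - Real.sqrt (1 - 4 * ε * ((1 - ε) / (1 + ε ^ 2)) ^ 2))

theorem isLeast_quadratic_roots {c q s : ℝ} (hc : 0 ≤ c) (hs : 0 ≤ s)
    (hq : c ^ 2 * (1 - s ^ 2) = q) :
    IsLeast {x | x ^ 2 - 2 * c * x + q = 0} (c * (1 - s)) := by
  refine ⟨show _ = _ by linear_combination -hq, fun x (hx : _ = _) => ?_⟩
  have hroots : (x - c * (1 - s)) * (x - c * (1 + s)) = 0 := by linear_combination hx + hq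
  rcases mul_eq_zero.1 hroots with h | h
  · linarith
  · nlinarith [mul_nonneg hc hs]

noncomputable def annulusDiscr (ε : ℝ) : ℝ := 1 - 4 * ε * ((1 - ε) / (1 + ε ^ 2)) ^ 2

theorem annulusDiscr_nonneg (ε : ℝ) : 0 ≤ annulusDiscr ε := by
  have h : annulusDiscr ε = ((1 + ε ^ 2) ^ 2 - 4 * ε * (1 - ε) ^ 2) / (1 + ε ^ 2) ^ 2 := by
    unfold annulusDiscr
    field_simp
  rw [h]
  apply div_nonneg _ (by positivity)
  nlinarith [sq_nonneg (ε ^ 2 - 2 * ε), sq_nonneg (ε - 1 / 3), sq_nonneg ε]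

theorem sq_mul_one_sub_annulusDiscr {ε : ℝ} (h0 : 0 < ε) (h1 : ε < 1) :
    (1 / (2 * ε) * ((1 + ε ^ 2) / (1 - ε))) ^ 2 * (1 - annulusDiscr ε) = 1 / ε := by
  have : 1 - ε ≠ 0 := by linarith
  unfold annulusDiscr
  field_simp
  ring

theorem sigmaOneAnnulus_isLeast_roots {ε : ℝ} (h0 : 0 < ε) (h1 : ε < 1) :
    IsLeast {σ | σ ^ 2 - σ * ((ε + 1) / ε) * ((1 + ε ^ 2) / (1 - ε ^ 2)) + 1 / ε = 0}
      (sigmaOneAnnulus ε) := by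
  have hcoeff : ∀ σ : ℝ, σ * ((ε + 1) / ε) * ((1 + ε ^ 2) / (1 - ε ^ 2)) =
      2 * (1 / (2 * ε) * ((1 + ε ^ 2) / (1 - ε))) * σ := by
    have : 1 - ε ≠ 0 := by linarith
    have hfactor : 1 - ε ^ 2 = (1 - ε) * (1 + ε) := by ring
    intro σ
    rw [hfactor]
    field_simp
    ring
  simp only [hcoeff]
  have hs := sq_sqrt (annulusDiscr_nonneg ε)
  exact isLeast_quadratic_roots (by have := sub_pos.2 h1; positivity) (sqrt_nonneg _)
    (hs ▸ sq_mul_one_sub_annulusDiscr h0 h1)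

noncomputable def sigmaOneAnnulusExt (ε : ℝ) : ℝ :=
  2 * (1 - ε) / ((1 + ε ^ 2) * (1 + √(annulusDiscr ε)))

theorem sigmaOneAnnulus_eq_ext {ε : ℝ} (h0 : 0 < ε) (h1 : ε < 1) :
    sigmaOneAnnulus ε = sigmaOneAnnulusExt ε := by
  have hc := sq_mul_one_sub_annulusDiscr h0 h1
  rw [← sq_sqrt (annulusDiscr_nonneg ε)] at hc
  have : 1 - ε ≠ 0 := by linarith
  have : 0 < 1 + √(annulusDiscr ε) := by positivity
  change 1 / (2 * ε) * ((1 + ε ^ 2) / (1 - ε)) * (1 - √(annulusDiscr ε)) = _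
  rw [sigmaOneAnnulusExt, eq_div_iff (by positivity)]
  field_simp at hc ⊢
  linear_combination hc

theorem sigmaOneAnnulusExt_zero : sigmaOneAnnulusExt 0 = 1 := by
  norm_num [sigmaOneAnnulusExt, annulusDiscr]

theorem hasDerivAt_annulusDiscr_zero : HasDerivAt annulusDiscr (-4) 0 := by
  have h := ((hasDerivAt_id' (0 : ℝ)).const_mul 4).mul
    ((((hasDerivAt_id' (0 : ℝ)).const_sub 1).div
      (((hasDerivAt_id' (0 : ℝ)).pow 2).const_add 1) (by norm_num)).pow 2)
  exact (h.const_sub 1).congr_deriv (by norm_num)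

theorem hasDerivAt_sigmaOneAnnulusExt_zero : HasDerivAt sigmaOneAnnulusExt 0 0 := by
  have hS := hasDerivAt_annulusDiscr_zero.sqrt (by norm_num [annulusDiscr])
  have h := (((hasDerivAt_id' (0 : ℝ)).const_sub 1).const_mul 2).div
    ((((hasDerivAt_id' (0 : ℝ)).pow 2).const_add 1).mul (hS.const_add 1))
    (by norm_num [annulusDiscr])
  exact h.congr_deriv (by norm_num [annulusDiscr])

/-- For `0 < ε < 1`, `sigmaOneAnnulus ε` is the smaller root of the quadratic
`σ² − σ((ε+1)/ε)((1+ε²)/(1−ε²)) + 1/ε` (the `k = 1` polynomial `p₁`), and it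
satisfies the asymptotic expansion
`σ₁(ε)·2π(1+ε) = 2π + 2πε + o(ε)` as `ε → 0⁺`, where `2π(1+ε)` is the
perimeter of `∂A_ε`. -/
theorem sigmaOneAnnulus_root_and_asymptotics :
    (∀ ε : ℝ, 0 < ε → ε < 1 →
      (sigmaOneAnnulus ε ^ 2 -
        sigmaOneAnnulus ε * ((ε + 1) / ε) * ((1 + ε ^ 2) / (1 - ε ^ 2)) + 1 / ε = 0) ∧
      (∀ σ : ℝ, σ ^ 2 - σ * ((ε + 1) / ε) * ((1 + ε ^ 2) / (1 - ε ^ 2)) + 1 / ε = 0 →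
        sigmaOneAnnulus ε ≤ σ)) ∧
    Tendsto
      (fun ε : ℝ =>
        (sigmaOneAnnulus ε * (2 * π * (1 + ε)) - 2 * π - 2 * π * ε) / ε)
      (nhdsWithin 0 (Set.Ioi 0)) (nhds 0) := by
  refine ⟨fun ε h0 h1 => ?_, ?_⟩
  · have h := sigmaOneAnnulus_isLeast_roots h0 h1
    exact ⟨h.1, fun σ hσ => h.2 hσ⟩
  have hslope := (hasDerivAt_iff_tendsto_slope.1 hasDerivAt_sigmaOneAnnulusExt_zero).mono_left
    (nhdsWithin_mono _ fun x (hx : 0 < x) => hx.ne')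
  have hperimeter : Tendsto (fun ε : ℝ => 2 * π * (1 + ε)) (nhdsWithin 0 (Set.Ioi 0))
      (nhds (2 * π)) :=
    tendsto_nhdsWithin_of_tendsto_nhds <| by
      simpa using (by fun_prop : Continuous fun ε : ℝ => 2 * π * (1 + ε)).tendsto 0
  refine (mul_zero (2 * π) ▸ hperimeter.mul hslope).congr' ?_
  filter_upwards [Ioo_mem_nhdsGT one_pos] with ε ⟨h0, h1⟩
  rw [sigmaOneAnnulus_eq_ext h0 h1, slope_def_field, sigmaOneAnnulusExt_zero, sub_zero]
  field_simp
  ring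
end

section
/- For all sufficiently small ε > 0, the first nonzero Steklov eigenvalue σ₁(A_ε) of the annulus A_ε = {ε < |x| < 1} ⊂ ℝ² satisfies σ₁(A_ε) · L(∂A_ε) > 2π, where L(∂A_ε) = 2π(1+ε) is the perimeter. Hence Weinstock's inequality σ₁ L ≤ 2π fails for annuli. -/
open Real

/-- For all sufficiently small `ε > 0`, the first nonzero Steklov eigenvalue
`σ₁(A_ε)` of the annulus `A_ε = {ε < |x| < 1} ⊂ ℝ²` (given by the explicit
formula `sigmaOneAnnulus ε`) satisfies `σ₁(A_ε) · L(∂A_ε) > 2π`, where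
`L(∂A_ε) = 2π(1+ε)` is the perimeter. Hence Weinstock's inequality
`σ₁ L ≤ 2π` fails for annuli. -/
theorem weinstock_fails_for_annuli :
    ∃ ε₀ > (0 : ℝ), ∀ ε : ℝ, 0 < ε → ε < ε₀ →
      sigmaOneAnnulus ε * (2 * π * (1 + ε)) > 2 * π := by
  refine ⟨1/10, by norm_num, fun ε hε hε10 => ?_⟩
  set s : ℝ := Real.sqrt (1 - 4 * ε * ((1 - ε) / (1 + ε ^ 2)) ^ 2) with hs
  have hden : (0:ℝ) < 1 + ε ^ 2 := by positivity
  have h1ε : (0:ℝ) < 1 - ε := by linarith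
  have hs0 : 0 ≤ s := Real.sqrt_nonneg _
  have harg : 0 ≤ 1 - 4 * ε * ((1 - ε) / (1 + ε ^ 2)) ^ 2 := by
    have h : ((1 - ε) / (1 + ε ^ 2)) ^ 2 ≤ 1 := by
      rw [div_pow, div_le_one (by positivity)]
      nlinarith
    nlinarith
  have hssq : s ^ 2 = 1 - 4 * ε * ((1 - ε) / (1 + ε ^ 2)) ^ 2 :=
    Real.sq_sqrt harg
  -- cleared version of the square identity
  have hE : s ^ 2 * (1 + ε ^ 2) ^ 2 = (1 + ε ^ 2) ^ 2 - 4 * ε * (1 - ε) ^ 2 := by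
    have := hssq
    field_simp at this
    nlinarith [this]
  -- s (1+ε²) < 1 - 3ε²
  have hsmall : s * (1 + ε ^ 2) < 1 - 3 * ε ^ 2 := by
    have h3 : (0:ℝ) < 1 - 3 * ε ^ 2 := by nlinarith
    nlinarith [sq_nonneg (s * (1 + ε ^ 2) - (1 - 3 * ε ^ 2)),
      sq_nonneg (s * (1 + ε ^ 2) + (1 - 3 * ε ^ 2)), mul_nonneg hs0 hden.le]
  -- key polynomial inequality
  have key : 2 * ε * (1 - ε) < (1 + ε) * (1 + ε ^ 2) * (1 - s) := by
    have h1s : (0:ℝ) < 1 + s := by linarith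
    nlinarith [mul_pos h1s (mul_pos (mul_pos (show (0:ℝ) < 1 + ε by linarith) hden)
      (show (0:ℝ) < 1 - s by nlinarith)), hE, hsmall]
  have hπ := Real.pi_pos
  have hrw : sigmaOneAnnulus ε * (2 * π * (1 + ε)) =
      π * ((1 + ε) * (1 + ε ^ 2) * (1 - s)) / (ε * (1 - ε)) := by
    rw [sigmaOneAnnulus, ← hs]
    field_simp
  rw [gt_iff_lt, hrw, lt_div_iff₀ (by positivity)]
  nlinarith [key, hπ]
end
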